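/- arXiv:2002.09549 — 3 statements merged into one kernel-verified Lean document; each statement's English description precedes it below -/
import Mathlib

section
/- For all positive real numbers λ, γ, κ, ρ, φ, the quantity ν₃² := (c₁ + c₂)/2 satisfies ν₃² > ρ², where c₁ = (λρ² + ρκγ + φ)/λ and c₂ = √((λρ² + ρκγ + φ − 2φ)² + 4φρκγ)/λ. -/
lemma lt_sqrt_sq_add_of_pos (x : ℝ) {c : ℝ} (hc : 0 < c) : x < √(x ^ 2 + c) :=
  calc x ≤ |x| := le_abs_self x
    _ = √(x ^ 2) := (Real.sqrt_sq_eq_abs x).symm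
    _ < √(x ^ 2 + c) := Real.sqrt_lt_sqrt (sq_nonneg x) (by linarith)

theorem stmt_2_general (l γ κ ρ φ : ℝ) (hl : 0 < l) (hγ : 0 < γ) (hκ : 0 < κ) (hρ : 0 < ρ)
    (c₁ c₂ : ℝ) (hc₁ : c₁ = (l * ρ ^ 2 + ρ * κ * γ + φ) / l)
    (hc₂ : c₂ = Real.sqrt ((l * ρ ^ 2 + ρ * κ * γ + φ - 2 * φ) ^ 2 + 4 * φ * ρ * κ * γ) / l) :
    (c₁ + c₂) / 2 > ρ ^ 2 := by
  subst hc₁ hc₂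
  -- With a = lρ², b = ρκγ the radicand is (a - b - φ)² + 4ab, so its root exceeds 2lρ² - θ.
  have hroot : l * ρ ^ 2 - ρ * κ * γ - φ
      < √((l * ρ ^ 2 + ρ * κ * γ + φ - 2 * φ) ^ 2 + 4 * φ * ρ * κ * γ) := by
    rw [show (l * ρ ^ 2 + ρ * κ * γ + φ - 2 * φ) ^ 2 + 4 * φ * ρ * κ * γ
        = (l * ρ ^ 2 - ρ * κ * γ - φ) ^ 2 + 4 * (l * ρ ^ 2) * (ρ * κ * γ) by ring]
    exact lt_sqrt_sq_add_of_pos _ (by positivity)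
  rw [gt_iff_lt, ← add_div, div_div, lt_div_iff₀ (by positivity)]
  linarith

theorem stmt_2 (l γ κ ρ φ : ℝ) (hl : 0 < l) (hγ : 0 < γ) (hκ : 0 < κ) (hρ : 0 < ρ)
    (hφ : 0 < φ)
    (c₁ c₂ : ℝ) (hc₁ : c₁ = (l * ρ ^ 2 + ρ * κ * γ + φ) / l)
    (hc₂ : c₂ = Real.sqrt ((l * ρ ^ 2 + ρ * κ * γ + φ - 2 * φ) ^ 2 + 4 * φ * ρ * κ * γ) / l) :
    (c₁ + c₂) / 2 > ρ ^ 2 :=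
  stmt_2_general l γ κ ρ φ hl hγ hκ hρ c₁ c₂ hc₁ hc₂
end

section
/- Let λ, γ, κ, ρ, φ > 0 and let ν₁, ν₃ be the negative square roots as above (so ν₁² < ρ² < ν₃²). Define for s ≥ 0: S₄₄(s) = (1/(2ρ²(ν₁² − ν₃²))) · [ (ν₁²−ρ²)(ν₃²+ρ²)cosh(ν₃ s) − (ν₁²+ρ²)(ν₃²−ρ²)cosh(ν₁ s) + 2ρν₃(ν₁²−ρ²)sinh(ν₃ s) − 2ρν₁(ν₃²−ρ²)sinh(ν₁ s) ]. Then S₄₄(0) = 1 and S₄₄ is nondecreasing in s on [0, ∞); in particular S₄₄(s) ≥ 1 for all s ≥ 0. -/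
/-!
After the substitution `cosh (ν s) = cosh (|ν| s)`, `ν sinh (ν s) = |ν| sinh (|ν| s)`, the function
`S₄₄` is a combination of `cosh (ν₃ s)`, `cosh (ν₁ s)`, `ν₃ sinh (ν₃ s)` and `ν₁ sinh (ν₁ s)`, each
nondecreasing on `[0, ∞)`, whose coefficients are nonnegative exactly because
`ν₁² < ρ² < ν₃²`; the two `cosh` coefficients sum to `1`. The bracketing of `ρ²` comes from the
identity `(θ - 2φ)² + 4φρκγ = (θ - 2λρ²)² + 4λρ³κγ`, which gives `|θ - 2λρ²| < λ c₂`.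
-/

open Real Set

noncomputable def S44 (ρ ν₁ ν₃ s : ℝ) : ℝ :=
  (1 / (2 * ρ ^ 2 * (ν₁ ^ 2 - ν₃ ^ 2))) *
    ((ν₁ ^ 2 - ρ ^ 2) * (ν₃ ^ 2 + ρ ^ 2) * cosh (ν₃ * s)
      - (ν₁ ^ 2 + ρ ^ 2) * (ν₃ ^ 2 - ρ ^ 2) * cosh (ν₁ * s)
      + 2 * ρ * ν₃ * (ν₁ ^ 2 - ρ ^ 2) * sinh (ν₃ * s)
      - 2 * ρ * ν₁ * (ν₃ ^ 2 - ρ ^ 2) * sinh (ν₁ * s))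

lemma MonotoneOn.const_mul_of_nonneg {s : Set ℝ} {f : ℝ → ℝ} (hf : MonotoneOn f s) {c : ℝ}
    (hc : 0 ≤ c) : MonotoneOn (fun x => c * f x) s :=
  fun _ hx _ hy hxy => mul_le_mul_of_nonneg_left (hf hx hy hxy) hc

lemma monotoneOn_cosh_mul (ν : ℝ) : MonotoneOn (fun s => cosh (ν * s)) (Ici 0) := by
  intro s hs t ht hst
  rw [mem_Ici] at hs ht
  simp only [cosh_le_cosh, abs_mul, abs_of_nonneg hs, abs_of_nonneg ht]
  exact mul_le_mul_of_nonneg_left hst (abs_nonneg ν)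

lemma monotoneOn_mul_sinh_mul (ν : ℝ) : MonotoneOn (fun s => ν * sinh (ν * s)) (Ici 0) := by
  have h_abs : ∀ s, ν * sinh (ν * s) = |ν| * sinh (|ν| * s) := by
    intro s
    rcases abs_choice ν with h | h <;> rw [h]
    rw [neg_mul ν s, sinh_neg, neg_mul_neg]
  simp only [h_abs]
  intro s _ t _ hst
  exact mul_le_mul_of_nonneg_left
    (sinh_le_sinh.mpr (mul_le_mul_of_nonneg_left hst (abs_nonneg ν))) (abs_nonneg ν)

section S44

variable {ρ ν₁ ν₃ : ℝ}

lemma S44_eq_combination (hρ : ρ ≠ 0) (hν : ν₁ ^ 2 ≠ ν₃ ^ 2) (s : ℝ) :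
    S44 ρ ν₁ ν₃ s =
      (ρ ^ 2 - ν₁ ^ 2) * (ν₃ ^ 2 + ρ ^ 2) / (2 * ρ ^ 2 * (ν₃ ^ 2 - ν₁ ^ 2)) * cosh (ν₃ * s)
      + (ν₁ ^ 2 + ρ ^ 2) * (ν₃ ^ 2 - ρ ^ 2) / (2 * ρ ^ 2 * (ν₃ ^ 2 - ν₁ ^ 2)) * cosh (ν₁ * s)
      + (ρ ^ 2 - ν₁ ^ 2) / (ρ * (ν₃ ^ 2 - ν₁ ^ 2)) * (ν₃ * sinh (ν₃ * s))
      + (ν₃ ^ 2 - ρ ^ 2) / (ρ * (ν₃ ^ 2 - ν₁ ^ 2)) * (ν₁ * sinh (ν₁ * s)) := by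
  unfold S44
  field_simp
  ring

lemma S44_zero (hρ : ρ ≠ 0) (hν : ν₁ ^ 2 ≠ ν₃ ^ 2) : S44 ρ ν₁ ν₃ 0 = 1 := by
  simp only [S44, mul_zero, cosh_zero, sinh_zero]
  field_simp
  ring

lemma monotoneOn_S44 (hρ : 0 < ρ) (h₁ : ν₁ ^ 2 < ρ ^ 2) (h₃ : ρ ^ 2 < ν₃ ^ 2) :
    MonotoneOn (S44 ρ ν₁ ν₃) (Ici 0) := by
  have hgap : 0 < ν₃ ^ 2 - ν₁ ^ 2 := by linarith
  rw [funext (S44_eq_combination hρ.ne' (by linarith : ν₁ ^ 2 < ν₃ ^ 2).ne)]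
  refine (((monotoneOn_cosh_mul ν₃).const_mul_of_nonneg ?_).add
    ((monotoneOn_cosh_mul ν₁).const_mul_of_nonneg ?_)).add
    ((monotoneOn_mul_sinh_mul ν₃).const_mul_of_nonneg ?_) |>.add
    ((monotoneOn_mul_sinh_mul ν₁).const_mul_of_nonneg ?_)
  all_goals exact div_nonneg (by nlinarith) (by positivity)

end S44

lemma abs_sub_lt_sqrt_discriminant {l γ κ ρ φ θ : ℝ} (hl : 0 < l) (hγ : 0 < γ) (hκ : 0 < κ)
    (hρ : 0 < ρ) (hθ : θ = l * ρ ^ 2 + ρ * κ * γ + φ) :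
    |θ - 2 * l * ρ ^ 2| < √((θ - 2 * φ) ^ 2 + 4 * φ * ρ * κ * γ) := by
  have h_disc : (θ - 2 * φ) ^ 2 + 4 * φ * ρ * κ * γ
      = (θ - 2 * l * ρ ^ 2) ^ 2 + 4 * l * ρ ^ 3 * κ * γ := by
    subst hθ; ring
  rw [lt_sqrt (abs_nonneg _), sq_abs, h_disc]
  have : 0 < 4 * l * ρ ^ 3 * κ * γ := by positivity
  linarith

lemma sq_neg_sqrt_lt_lt_sq_neg_sqrt {l ρ θ u : ℝ} (hl : 0 < l) (hρ : 0 < ρ)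
    (hu : |θ - 2 * l * ρ ^ 2| < u) :
    (-√((θ / l - u / l) / 2)) ^ 2 < ρ ^ 2 ∧ ρ ^ 2 < (-√((θ / l + u / l) / 2)) ^ 2 := by
  rw [neg_sq, neg_sq]
  obtain ⟨hlow, hhigh⟩ := abs_lt.mp hu
  constructor
  · refine pow_lt_pow_left₀ ((sqrt_lt' hρ).mpr ?_) (sqrt_nonneg _) two_ne_zero
    rw [← sub_div, div_div, div_lt_iff₀ (by positivity)]
    linarith
  · refine pow_lt_pow_left₀ ((lt_sqrt hρ.le).mpr ?_) hρ.le two_ne_zero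
    rw [← add_div, div_div, lt_div_iff₀ (by positivity)]
    linarith

theorem stmt_8_general (l γ κ ρ φ : ℝ) (hl : 0 < l) (hγ : 0 < γ) (hκ : 0 < κ) (hρ : 0 < ρ)
    (θ c₁ c₂ ν₁ ν₃ : ℝ) (hθ : θ = l * ρ ^ 2 + ρ * κ * γ + φ) (hc₁ : c₁ = θ / l)
    (hc₂ : c₂ = Real.sqrt ((θ - 2 * φ) ^ 2 + 4 * φ * ρ * κ * γ) / l)
    (hν₁ : ν₁ = -Real.sqrt ((c₁ - c₂) / 2)) (hν₃ : ν₃ = -Real.sqrt ((c₁ + c₂) / 2))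
    (S₄₄ : ℝ → ℝ)
    (hS : ∀ s : ℝ, S₄₄ s = (1 / (2 * ρ ^ 2 * (ν₁ ^ 2 - ν₃ ^ 2))) *
      ((ν₁ ^ 2 - ρ ^ 2) * (ν₃ ^ 2 + ρ ^ 2) * Real.cosh (ν₃ * s)
        - (ν₁ ^ 2 + ρ ^ 2) * (ν₃ ^ 2 - ρ ^ 2) * Real.cosh (ν₁ * s)
        + 2 * ρ * ν₃ * (ν₁ ^ 2 - ρ ^ 2) * Real.sinh (ν₃ * s)
        - 2 * ρ * ν₁ * (ν₃ ^ 2 - ρ ^ 2) * Real.sinh (ν₁ * s))) :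
    S₄₄ 0 = 1 ∧ MonotoneOn S₄₄ (Set.Ici 0) ∧ ∀ s : ℝ, 0 ≤ s → 1 ≤ S₄₄ s := by
  obtain ⟨h₁, h₃⟩ : ν₁ ^ 2 < ρ ^ 2 ∧ ρ ^ 2 < ν₃ ^ 2 := by
    subst hν₁ hν₃ hc₁ hc₂
    exact sq_neg_sqrt_lt_lt_sq_neg_sqrt hl hρ (abs_sub_lt_sqrt_discriminant hl hγ hκ hρ hθ)
  obtain rfl : S₄₄ = S44 ρ ν₁ ν₃ := funext hS
  have h_zero : S44 ρ ν₁ ν₃ 0 = 1 := S44_zero hρ.ne' (by linarith)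
  have h_mono := monotoneOn_S44 hρ h₁ h₃
  exact ⟨h_zero, h_mono, fun s hs => h_zero ▸ h_mono self_mem_Ici hs hs⟩

theorem stmt_8 (l γ κ ρ φ : ℝ) (hl : 0 < l) (hγ : 0 < γ) (hκ : 0 < κ) (hρ : 0 < ρ)
    (hφ : 0 < φ)
    (θ c₁ c₂ ν₁ ν₃ : ℝ) (hθ : θ = l * ρ ^ 2 + ρ * κ * γ + φ) (hc₁ : c₁ = θ / l)
    (hc₂ : c₂ = Real.sqrt ((θ - 2 * φ) ^ 2 + 4 * φ * ρ * κ * γ) / l)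
    (hν₁ : ν₁ = -Real.sqrt ((c₁ - c₂) / 2)) (hν₃ : ν₃ = -Real.sqrt ((c₁ + c₂) / 2))
    (S₄₄ : ℝ → ℝ)
    (hS : ∀ s : ℝ, S₄₄ s = (1 / (2 * ρ ^ 2 * (ν₁ ^ 2 - ν₃ ^ 2))) *
      ((ν₁ ^ 2 - ρ ^ 2) * (ν₃ ^ 2 + ρ ^ 2) * Real.cosh (ν₃ * s)
        - (ν₁ ^ 2 + ρ ^ 2) * (ν₃ ^ 2 - ρ ^ 2) * Real.cosh (ν₁ * s)
        + 2 * ρ * ν₃ * (ν₁ ^ 2 - ρ ^ 2) * Real.sinh (ν₃ * s)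
        - 2 * ρ * ν₁ * (ν₃ ^ 2 - ρ ^ 2) * Real.sinh (ν₁ * s))) :
    S₄₄ 0 = 1 ∧ MonotoneOn S₄₄ (Set.Ici 0) ∧ ∀ s : ℝ, 0 ≤ s → 1 ≤ S₄₄ s :=
  stmt_8_general l γ κ ρ φ hl hγ hκ hρ θ c₁ c₂ ν₁ ν₃ hθ hc₁ hc₂ hν₁ hν₃ S₄₄ hS
end

section
/- Let λ, γ, κ, ρ, φ, ϱ > 0 with ν₁, ν₃ as above, and let G₃(s; ϱ) denote the function G₃(s;ϱ) = (1/(2λν₁ν₃(ν₁²−ν₃²)))·[ ν₁ν₃(γκρ − 2λ(ν₁²−ρ²))cosh(ν₁ s) − ν₃(γκν₁² + 2ϱ(ν₁²−ρ²))sinh(ν₁ s) − ν₁ν₃(γκρ − 2λ(ν₃²−ρ²))cosh(ν₃ s) + ν₁(γκν₃² + 2ϱ(ν₃²−ρ²))sinh(ν₃ s) ]. Then for all s ≥ 0, G₃(s; ϱ) ≤ G₃(s; 0), i.e., increasing the terminal penalty parameter from 0 to ϱ decreases G₃ pointwise. -/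
theorem stmt_11 (l γ κ ρ φ ϱ ν₁ ν₃ : ℝ) (hl : 0 < l) (hγ : 0 < γ) (hκ : 0 < κ) (hρ : 0 < ρ)
    (hφ : 0 < φ) (hϱ : 0 < ϱ) (h₁ : ν₁ < 0) (h₃ : ν₃ < 0)
    (h₁ρ : ν₁ ^ 2 < ρ ^ 2) (hρ₃ : ρ ^ 2 < ν₃ ^ 2)
    (G₃ : ℝ → ℝ → ℝ)
    (hG : ∀ (s r : ℝ), G₃ s r = (1 / (2 * l * ν₁ * ν₃ * (ν₁ ^ 2 - ν₃ ^ 2))) *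
      (ν₁ * ν₃ * (γ * κ * ρ - 2 * l * (ν₁ ^ 2 - ρ ^ 2)) * Real.cosh (ν₁ * s)
        - ν₃ * (γ * κ * ν₁ ^ 2 + 2 * r * (ν₁ ^ 2 - ρ ^ 2)) * Real.sinh (ν₁ * s)
        - ν₁ * ν₃ * (γ * κ * ρ - 2 * l * (ν₃ ^ 2 - ρ ^ 2)) * Real.cosh (ν₃ * s)
        + ν₁ * (γ * κ * ν₃ ^ 2 + 2 * r * (ν₃ ^ 2 - ρ ^ 2)) * Real.sinh (ν₃ * s))) :
    ∀ s : ℝ, 0 ≤ s → G₃ s ϱ ≤ G₃ s 0 := by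
  intro s hs
  have hA : Real.sinh (ν₁ * s) ≤ 0 := by
    have : ν₁ * s ≤ 0 := mul_nonpos_of_nonpos_of_nonneg h₁.le hs
    simpa using Real.sinh_le_sinh.mpr this
  have hB : Real.sinh (ν₃ * s) ≤ 0 := by
    have : ν₃ * s ≤ 0 := mul_nonpos_of_nonpos_of_nonneg h₃.le hs
    simpa using Real.sinh_le_sinh.mpr this
  have hdiff : G₃ s ϱ - G₃ s 0 =
      (1 / (2 * l * ν₁ * ν₃ * (ν₁ ^ 2 - ν₃ ^ 2))) *
        (2 * ϱ * (-(ν₃ * (ν₁ ^ 2 - ρ ^ 2) * Real.sinh (ν₁ * s))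
          + ν₁ * (ν₃ ^ 2 - ρ ^ 2) * Real.sinh (ν₃ * s))) := by
    rw [hG, hG]; ring
  have hc : (1 / (2 * l * ν₁ * ν₃ * (ν₁ ^ 2 - ν₃ ^ 2))) ≤ 0 := by
    apply div_nonpos_of_nonneg_of_nonpos (by norm_num)
    have hp : 0 < 2 * l * ν₁ * ν₃ := by
      have := mul_pos_of_neg_of_neg h₁ h₃
      nlinarith
    exact (mul_neg_of_pos_of_neg hp (by linarith)).le
  have hb : 0 ≤ (2 * ϱ * (-(ν₃ * (ν₁ ^ 2 - ρ ^ 2) * Real.sinh (ν₁ * s))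
      + ν₁ * (ν₃ ^ 2 - ρ ^ 2) * Real.sinh (ν₃ * s))) := by
    have hp1 : 0 < ν₃ * (ν₁ ^ 2 - ρ ^ 2) := mul_pos_of_neg_of_neg h₃ (by linarith)
    have h1 : 0 ≤ -(ν₃ * (ν₁ ^ 2 - ρ ^ 2) * Real.sinh (ν₁ * s)) :=
      neg_nonneg.mpr (mul_nonpos_of_nonneg_of_nonpos hp1.le hA)
    have h2 : 0 ≤ ν₁ * (ν₃ ^ 2 - ρ ^ 2) * Real.sinh (ν₃ * s) :=
      mul_nonneg_of_nonpos_of_nonpos (mul_neg_of_neg_of_pos h₁ (by linarith)).le hB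
    nlinarith
  nlinarith [mul_nonpos_of_nonpos_of_nonneg hc hb]
end
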